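/- Let u, u₀ : ℝ → ℝ be smooth even strictly convex functions solving u''·P(u') = e^{−(tu+(1−t)u_ref)}·J and u₀''·P(u₀') = e^{−u_ref}·J respectively on (0,∞), with |t(u_ref − u)| ≤ ln C uniformly, where P(y) = y^{n₁+n₂}(λ−y)^k·P̃(y) with P̃ continuous, positive on [0,λ]. Suppose moreover C⁻¹y^{n₁+n₂}(λ−y)^k ≤ P(y) ≤ Cy^{n₁+n₂}(λ−y)^k, C⁻¹y^{n₁+n₂+1} ≤ Q(y)−Q(0) ≤ Cy^{n₁+n₂+1}, C⁻¹(λ−y)^{k+1} ≤ Q(λ)−Q(y) ≤ C(λ−y)^{k+1} on [0,λ], where Q is a primitive of P. Then C^{−N} ≤ u''(x)/u₀''(x) ≤ C^{N} for all x > 0, where N = 3 + 3(n₁+n₂)/(n₁+n₂+1) + 3k/(k+1). -/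

import Mathlib

open Real Set Filter Topology

set_option maxHeartbeats 1000000

private lemma deriv_zero_of_even' (u : ℝ → ℝ) (h : ∀ x, u (-x) = u x) : deriv u 0 = 0 := by
  have h1 : deriv (fun x => u (-x)) 0 = - deriv u (-0) := deriv_comp_neg u 0
  have h2 : (fun x => u (-x)) = u := funext h
  rw [h2] at h1
  simp at h1
  linarith

private lemma root_step' {a b c : ℝ} (ha : 0 ≤ a) (hb : 0 ≤ b) (hc : 1 ≤ c) (n : ℕ)
    (h : a ^ (n + 1) ≤ c * b ^ (n + 1)) :
    a ^ n ≤ c ^ ((n : ℝ) / ((n : ℝ) + 1)) * b ^ n := by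
  have hc0 : 0 < c := lt_of_lt_of_le one_pos hc
  set d : ℝ := c ^ ((1 : ℝ) / ((n : ℝ) + 1)) with hd
  have hdpow : d ^ (n + 1) = c := by
    rw [hd, ← Real.rpow_natCast (c ^ ((1:ℝ)/((n:ℝ)+1))) (n+1), ← Real.rpow_mul hc0.le]
    rw [show (1:ℝ)/((n:ℝ)+1) * ((n:ℕ)+1 : ℕ) = 1 by push_cast; field_simp]
    exact Real.rpow_one c
  have hd0 : 0 ≤ d := Real.rpow_nonneg hc0.le _
  have hab : a ≤ d * b := by
    have : a ^ (n+1) ≤ (d * b) ^ (n+1) := by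
      rw [mul_pow, hdpow]; exact h
    exact (pow_le_pow_iff_left₀ ha (by positivity) (Nat.succ_ne_zero n)).mp this
  calc a ^ n ≤ (d * b) ^ n := pow_le_pow_left₀ ha hab n
    _ = d ^ n * b ^ n := mul_pow _ _ _
    _ = c ^ ((n : ℝ) / ((n : ℝ) + 1)) * b ^ n := by
        rw [hd, ← Real.rpow_natCast (c ^ ((1:ℝ)/((n:ℝ)+1))) n, ← Real.rpow_mul hc0.le,
          one_div, inv_mul_eq_div]

private lemma chain3' {C X Y Z W : ℝ} (hC : 0 < C) (h1 : C⁻¹ * X ≤ Y) (h2 : Y ≤ C * Z)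
    (h3 : Z ≤ C * W) : X ≤ C ^ 3 * W := by
  calc X = C * (C⁻¹ * X) := by field_simp
    _ ≤ C * Y := mul_le_mul_of_nonneg_left h1 hC.le
    _ ≤ C * (C * Z) := mul_le_mul_of_nonneg_left h2 hC.le
    _ ≤ C * (C * (C * W)) :=
        mul_le_mul_of_nonneg_left (mul_le_mul_of_nonneg_left h3 hC.le) hC.le
    _ = C ^ 3 * W := by ring

private lemma aux_mono' (F F' : ℝ → ℝ) (hF : ∀ s, HasDerivAt F (F' s) s)
    (h0 : ∀ s ∈ Set.Ioi (0:ℝ), 0 ≤ F' s) : MonotoneOn F (Set.Ici (0:ℝ)) := by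
  apply monotoneOn_of_deriv_nonneg (convex_Ici 0)
  · exact fun s _ => (hF s).continuousAt.continuousWithinAt
  · exact fun s _ => (hF s).differentiableAt.differentiableWithinAt
  · intro s hs
    rw [interior_Ici] at hs
    rw [(hF s).deriv]
    exact h0 s hs

private lemma core' {C D A B pa pb e1 e0 Jx : ℝ} (hpa : 0 < pa) (hpb : 0 < pb) (hJx : 0 < Jx)
    (hC : 0 < C) (hD : 0 < D)
    (hA : A * pa = e1 * Jx) (hB : B * pb = e0 * Jx)
    (he0 : 0 ≤ e0)
    (he : e1 ≤ C * e0) (hp : pb ≤ C ^ 2 * D * pa) : A ≤ (C ^ 3 * D) * B := by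
  have key : A * (pa * pb) ≤ ((C ^ 3 * D) * B) * (pa * pb) := by
    calc A * (pa * pb) = (e1 * Jx) * pb := by rw [← hA]; ring
      _ ≤ ((C * e0) * Jx) * pb := by
          apply mul_le_mul_of_nonneg_right _ hpb.le
          exact mul_le_mul_of_nonneg_right he hJx.le
      _ ≤ ((C * e0) * Jx) * (C ^ 2 * D * pa) := by
          apply mul_le_mul_of_nonneg_left hp
          exact mul_nonneg (mul_nonneg hC.le he0) hJx.le
      _ = (C ^ 3 * D) * ((e0 * Jx) * pa) := by ring
      _ = ((C ^ 3 * D) * B) * (pa * pb) := by rw [← hB]; ring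
  exact le_of_mul_le_mul_right key (mul_pos hpa hpb)

/-- A priori C² estimate: under the structural bounds on P and its primitive Q and the
uniform C⁰ bound |t(u_ref − u)| ≤ ln C, the ratio u''/u₀'' is pinched between
C^{−N} and C^{N} with N = 3 + 3(n₁+n₂)/(n₁+n₂+1) + 3k/(k+1). -/
theorem stmt_14 (n₁ n₂ k : ℕ) (lam t C : ℝ) (hC : 1 ≤ C) (ht0 : 0 ≤ t) (ht1 : t ≤ 1)
    (P Pt Q J uref u u₀ : ℝ → ℝ)
    (hJ : ∀ x, J x = Real.sinh x ^ n₁ * Real.sinh (2 * x) ^ n₂)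
    (hPt : Continuous Pt) (hPtpos : ∀ y ∈ Set.Icc (0:ℝ) lam, 0 < Pt y)
    (hP : ∀ y, P y = y ^ (n₁ + n₂) * (lam - y) ^ k * Pt y)
    (hQ : ∀ y, HasDerivAt Q (P y) y)
    (hu : ContDiff ℝ (⊤ : ℕ∞) u) (hueven : ∀ x, u (-x) = u x)
    (huconv : StrictConvexOn ℝ Set.univ u)
    (hurange : Set.range (deriv u) = Set.Ioo (-lam) lam)
    (hu₀ : ContDiff ℝ (⊤ : ℕ∞) u₀) (hu₀even : ∀ x, u₀ (-x) = u₀ x)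
    (hu₀conv : StrictConvexOn ℝ Set.univ u₀)
    (hu₀range : Set.range (deriv u₀) = Set.Ioo (-lam) lam)
    (hequ : ∀ x > (0:ℝ), deriv (deriv u) x * P (deriv u x)
      = Real.exp (-(t * u x + (1 - t) * uref x)) * J x)
    (hequ₀ : ∀ x > (0:ℝ), deriv (deriv u₀) x * P (deriv u₀ x)
      = Real.exp (-(uref x)) * J x)
    (hC0 : ∀ x, |t * (uref x - u x)| ≤ Real.log C)
    (hPb : ∀ y ∈ Set.Icc (0:ℝ) lam,
      C⁻¹ * (y ^ (n₁ + n₂) * (lam - y) ^ k) ≤ P y ∧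
      P y ≤ C * (y ^ (n₁ + n₂) * (lam - y) ^ k))
    (hQb1 : ∀ y ∈ Set.Icc (0:ℝ) lam,
      C⁻¹ * y ^ (n₁ + n₂ + 1) ≤ Q y - Q 0 ∧ Q y - Q 0 ≤ C * y ^ (n₁ + n₂ + 1))
    (hQb2 : ∀ y ∈ Set.Icc (0:ℝ) lam,
      C⁻¹ * (lam - y) ^ (k + 1) ≤ Q lam - Q y ∧ Q lam - Q y ≤ C * (lam - y) ^ (k + 1)) :
    ∀ x > (0:ℝ),
      C ^ (-(3 + 3 * ((n₁ : ℝ) + n₂) / ((n₁ : ℝ) + n₂ + 1) + 3 * (k : ℝ) / ((k : ℝ) + 1)))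
          ≤ deriv (deriv u) x / deriv (deriv u₀) x ∧
      deriv (deriv u) x / deriv (deriv u₀) x
          ≤ C ^ (3 + 3 * ((n₁ : ℝ) + n₂) / ((n₁ : ℝ) + n₂ + 1) + 3 * (k : ℝ) / ((k : ℝ) + 1)) := by
  intro x hx
  have hC0' : 0 < C := lt_of_lt_of_le one_pos hC
  -- lam > 0
  have hlam : 0 < lam := by
    have hne : (Set.Ioo (-lam) lam).Nonempty := hurange ▸ Set.range_nonempty _
    obtain ⟨y, hy1, hy2⟩ := hne
    linarith
  -- differentiability
  have hud : Differentiable ℝ u := hu.differentiable (by simp)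
  have hud' : Differentiable ℝ (deriv u) :=
    ((contDiff_infty_iff_deriv.mp (hu.of_le (by simp))).2).differentiable (by simp)
  have hu₀d : Differentiable ℝ u₀ := hu₀.differentiable (by simp)
  have hu₀d' : Differentiable ℝ (deriv u₀) :=
    ((contDiff_infty_iff_deriv.mp (hu₀.of_le (by simp))).2).differentiable (by simp)
  -- derivatives vanish at 0
  have hu0 : deriv u 0 = 0 := deriv_zero_of_even' u hueven
  have hu₀0 : deriv u₀ 0 = 0 := deriv_zero_of_even' u₀ hu₀even
  -- strict monotonicity of derivatives
  have humono : StrictMono (deriv u) := by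
    have := huconv.strictMonoOn_deriv (fun s _ => hud s)
    exact fun p q hpq => this (Set.mem_univ p) (Set.mem_univ q) hpq
  have hu₀mono : StrictMono (deriv u₀) := by
    have := hu₀conv.strictMonoOn_deriv (fun s _ => hu₀d s)
    exact fun p q hpq => this (Set.mem_univ p) (Set.mem_univ q) hpq
  -- range facts
  have humem : ∀ s, deriv u s ∈ Set.Ioo (-lam) lam := fun s => hurange ▸ Set.mem_range_self s
  have hu₀mem : ∀ s, deriv u₀ s ∈ Set.Ioo (-lam) lam := fun s => hu₀range ▸ Set.mem_range_self s
  have hupos : ∀ s > (0:ℝ), 0 < deriv u s := fun s hs => hu0 ▸ humono hs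
  have hu₀pos : ∀ s > (0:ℝ), 0 < deriv u₀ s := fun s hs => hu₀0 ▸ hu₀mono hs
  -- tendsto lam at top
  have hutop : Tendsto (deriv u) atTop (𝓝 lam) := by
    have hb : BddAbove (Set.range (deriv u)) := hurange ▸ bddAbove_Ioo
    have := tendsto_atTop_ciSup humono.monotone hb
    rwa [show (⨆ s, deriv u s) = lam by
      rw [← sSup_range, hurange, csSup_Ioo (by linarith)]] at this
  have hu₀top : Tendsto (deriv u₀) atTop (𝓝 lam) := by
    have hb : BddAbove (Set.range (deriv u₀)) := hu₀range ▸ bddAbove_Ioo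
    have := tendsto_atTop_ciSup hu₀mono.monotone hb
    rwa [show (⨆ s, deriv u₀ s) = lam by
      rw [← sSup_range, hu₀range, csSup_Ioo (by linarith)]] at this
  -- exponential bounds
  have hee1 : ∀ s, Real.exp (-(t * u s + (1 - t) * uref s)) ≤ C * Real.exp (-(uref s)) := by
    intro s
    have h1 : t * (uref s - u s) ≤ Real.log C := (abs_le.mp (hC0 s)).2
    have hsplit : Real.exp (-(t * u s + (1 - t) * uref s))
        = Real.exp (t * (uref s - u s)) * Real.exp (-(uref s)) := by
      rw [← Real.exp_add]; ring_nf
    rw [hsplit]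
    have h2 : Real.exp (t * (uref s - u s)) ≤ C := by
      have := Real.exp_le_exp.mpr h1
      rwa [Real.exp_log hC0'] at this
    exact mul_le_mul_of_nonneg_right h2 (Real.exp_nonneg _)
  have hee2 : ∀ s, Real.exp (-(uref s)) ≤ C * Real.exp (-(t * u s + (1 - t) * uref s)) := by
    intro s
    have h1 : -(t * (uref s - u s)) ≤ Real.log C := (abs_le.mp (hC0 s)).1 |> neg_le.mp |>.trans_eq rfl
    have hsplit : Real.exp (-(uref s))
        = Real.exp (-(t * (uref s - u s))) * Real.exp (-(t * u s + (1 - t) * uref s)) := by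
      rw [← Real.exp_add]; ring_nf
    rw [hsplit]
    have h2 : Real.exp (-(t * (uref s - u s))) ≤ C := by
      have := Real.exp_le_exp.mpr h1
      rwa [Real.exp_log hC0'] at this
    exact mul_le_mul_of_nonneg_right h2 (Real.exp_nonneg _)
  -- J positivity
  have hJpos : ∀ s > (0:ℝ), 0 < J s := by
    intro s hs
    rw [hJ]
    exact mul_pos (pow_pos (Real.sinh_pos_iff.mpr hs) _)
      (pow_pos (Real.sinh_pos_iff.mpr (by linarith)) _)
  -- P positivity on (0, lam)
  have hPpos : ∀ y ∈ Set.Ioo (0:ℝ) lam, 0 < P y := by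
    intro y hy
    rw [hP]
    have hPt' := hPtpos y ⟨hy.1.le, hy.2.le⟩
    exact mul_pos (mul_pos (pow_pos hy.1 _) (pow_pos (by linarith [hy.2]) _)) hPt'
  -- derivatives of Q ∘ deriv u
  have hQu : ∀ s, HasDerivAt (fun r => Q (deriv u r)) (P (deriv u s) * deriv (deriv u) s) s :=
    fun s => (hQ (deriv u s)).comp s ((hud' s).hasDerivAt)
  have hQu₀ : ∀ s, HasDerivAt (fun r => Q (deriv u₀ r)) (P (deriv u₀ s) * deriv (deriv u₀) s) s :=
    fun s => (hQ (deriv u₀ s)).comp s ((hu₀d' s).hasDerivAt)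
  -- monotone comparison functions
  set F₁ : ℝ → ℝ := fun s => C * Q (deriv u₀ s) - Q (deriv u s) with hF₁def
  set F₂ : ℝ → ℝ := fun s => C * Q (deriv u s) - Q (deriv u₀ s) with hF₂def
  have hF₁mono : MonotoneOn F₁ (Set.Ici 0) := by
    apply aux_mono' F₁
      (fun s => C * (P (deriv u₀ s) * deriv (deriv u₀) s) - P (deriv u s) * deriv (deriv u) s)
      (fun s => ((hQu₀ s).const_mul C).sub (hQu s))
    intro s hs
    have e₀ := hequ₀ s hs
    have e₁ := hequ s hs
    rw [mul_comm (P (deriv u₀ s)), mul_comm (P (deriv u s)), e₀, e₁]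
    have := mul_le_mul_of_nonneg_right (hee1 s) (hJpos s hs).le
    nlinarith
  have hF₂mono : MonotoneOn F₂ (Set.Ici 0) := by
    apply aux_mono' F₂
      (fun s => C * (P (deriv u s) * deriv (deriv u) s) - P (deriv u₀ s) * deriv (deriv u₀) s)
      (fun s => ((hQu s).const_mul C).sub (hQu₀ s))
    intro s hs
    have e₀ := hequ₀ s hs
    have e₁ := hequ s hs
    rw [mul_comm (P (deriv u₀ s)), mul_comm (P (deriv u s)), e₀, e₁]
    have := mul_le_mul_of_nonneg_right (hee2 s) (hJpos s hs).le
    nlinarith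
  -- limits of F₁ F₂ at infinity
  have hQc : ContinuousAt Q lam := (hQ lam).continuousAt
  have hF₁lim : Tendsto F₁ atTop (𝓝 (C * Q lam - Q lam)) :=
    ((hQc.tendsto.comp hu₀top).const_mul C).sub (hQc.tendsto.comp hutop)
  have hF₂lim : Tendsto F₂ atTop (𝓝 (C * Q lam - Q lam)) :=
    ((hQc.tendsto.comp hutop).const_mul C).sub (hQc.tendsto.comp hu₀top)
  -- the four key integral comparisons at x
  have hxIci : x ∈ Set.Ici (0:ℝ) := hx.le
  have key1 : Q (deriv u x) - Q 0 ≤ C * (Q (deriv u₀ x) - Q 0) := by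
    have h := hF₁mono (Set.self_mem_Ici) hxIci hx.le
    simp only [hF₁def, hu0, hu₀0] at h
    linarith
  have key1' : Q (deriv u₀ x) - Q 0 ≤ C * (Q (deriv u x) - Q 0) := by
    have h := hF₂mono (Set.self_mem_Ici) hxIci hx.le
    simp only [hF₂def, hu0, hu₀0] at h
    linarith
  have key2 : Q lam - Q (deriv u x) ≤ C * (Q lam - Q (deriv u₀ x)) := by
    have h : F₁ x ≤ C * Q lam - Q lam := by
      apply ge_of_tendsto hF₁lim
      filter_upwards [eventually_ge_atTop x] with s hs
      exact hF₁mono hxIci (le_trans hx.le hs) hs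
    simp only [hF₁def] at h
    linarith
  have key2' : Q lam - Q (deriv u₀ x) ≤ C * (Q lam - Q (deriv u x)) := by
    have h : F₂ x ≤ C * Q lam - Q lam := by
      apply ge_of_tendsto hF₂lim
      filter_upwards [eventually_ge_atTop x] with s hs
      exact hF₂mono hxIci (le_trans hx.le hs) hs
    simp only [hF₂def] at h
    linarith
  -- notations
  set a := deriv u x with hadef
  set b := deriv u₀ x with hbdef
  have ha0 : 0 < a := hupos x hx
  have hb0 : 0 < b := hu₀pos x hx
  have halam : a < lam := (humem x).2
  have hblam : b < lam := (hu₀mem x).2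
  have haIcc : a ∈ Set.Icc (0:ℝ) lam := ⟨ha0.le, halam.le⟩
  have hbIcc : b ∈ Set.Icc (0:ℝ) lam := ⟨hb0.le, hblam.le⟩
  -- pow comparisons
  have h_am : a ^ (n₁ + n₂ + 1) ≤ C ^ 3 * b ^ (n₁ + n₂ + 1) :=
    chain3' hC0' (hQb1 a haIcc).1 key1 (hQb1 b hbIcc).2
  have h_bm : b ^ (n₁ + n₂ + 1) ≤ C ^ 3 * a ^ (n₁ + n₂ + 1) :=
    chain3' hC0' (hQb1 b hbIcc).1 key1' (hQb1 a haIcc).2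
  have h_ak : (lam - a) ^ (k + 1) ≤ C ^ 3 * (lam - b) ^ (k + 1) :=
    chain3' hC0' (hQb2 a haIcc).1 key2 (hQb2 b hbIcc).2
  have h_bk : (lam - b) ^ (k + 1) ≤ C ^ 3 * (lam - a) ^ (k + 1) :=
    chain3' hC0' (hQb2 b hbIcc).1 key2' (hQb2 a haIcc).2
  have hC3 : (1:ℝ) ≤ C ^ 3 := one_le_pow₀ hC
  set E1 : ℝ := (C ^ 3) ^ (((n₁ + n₂ : ℕ) : ℝ) / (((n₁ + n₂ : ℕ) : ℝ) + 1)) with hE1def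
  set E2 : ℝ := (C ^ 3) ^ (((k : ℕ) : ℝ) / (((k : ℕ) : ℝ) + 1)) with hE2def
  have hE1pos : 0 < E1 := Real.rpow_pos_of_pos (by positivity) _
  have hE2pos : 0 < E2 := Real.rpow_pos_of_pos (by positivity) _
  have r_am : a ^ (n₁ + n₂) ≤ E1 * b ^ (n₁ + n₂) := root_step' ha0.le hb0.le hC3 _ h_am
  have r_bm : b ^ (n₁ + n₂) ≤ E1 * a ^ (n₁ + n₂) := root_step' hb0.le ha0.le hC3 _ h_bm
  have r_ak : (lam - a) ^ k ≤ E2 * (lam - b) ^ k :=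
    root_step' (by linarith) (by linarith) hC3 _ h_ak
  have r_bk : (lam - b) ^ k ≤ E2 * (lam - a) ^ k :=
    root_step' (by linarith) (by linarith) hC3 _ h_bk
  have hDpos : 0 < E1 * E2 := mul_pos hE1pos hE2pos
  -- P comparisons
  have hPa : 0 < P a := hPpos a ⟨ha0, halam⟩
  have hPbx : 0 < P b := hPpos b ⟨hb0, hblam⟩
  have haP : a ^ (n₁ + n₂) * (lam - a) ^ k ≤ C * P a := by
    have h := (hPb a haIcc).1
    calc a ^ (n₁ + n₂) * (lam - a) ^ k
        = C * (C⁻¹ * (a ^ (n₁ + n₂) * (lam - a) ^ k)) := by field_simp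
      _ ≤ C * P a := mul_le_mul_of_nonneg_left h hC0'.le
  have hbP : b ^ (n₁ + n₂) * (lam - b) ^ k ≤ C * P b := by
    have h := (hPb b hbIcc).1
    calc b ^ (n₁ + n₂) * (lam - b) ^ k
        = C * (C⁻¹ * (b ^ (n₁ + n₂) * (lam - b) ^ k)) := by field_simp
      _ ≤ C * P b := mul_le_mul_of_nonneg_left h hC0'.le
  have hPab : P b ≤ C ^ 2 * (E1 * E2) * P a := by
    have hprod : b ^ (n₁ + n₂) * (lam - b) ^ k
        ≤ (E1 * E2) * (a ^ (n₁ + n₂) * (lam - a) ^ k) := by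
      have := mul_le_mul r_bm r_bk (pow_nonneg (by linarith) k)
        (mul_nonneg hE1pos.le (pow_nonneg ha0.le _))
      nlinarith [this]
    calc P b ≤ C * (b ^ (n₁ + n₂) * (lam - b) ^ k) := (hPb b hbIcc).2
      _ ≤ C * ((E1 * E2) * (a ^ (n₁ + n₂) * (lam - a) ^ k)) :=
          mul_le_mul_of_nonneg_left hprod hC0'.le
      _ ≤ C * ((E1 * E2) * (C * P a)) :=
          mul_le_mul_of_nonneg_left (mul_le_mul_of_nonneg_left haP hDpos.le) hC0'.le
      _ = C ^ 2 * (E1 * E2) * P a := by ring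
  have hPba : P a ≤ C ^ 2 * (E1 * E2) * P b := by
    have hprod : a ^ (n₁ + n₂) * (lam - a) ^ k
        ≤ (E1 * E2) * (b ^ (n₁ + n₂) * (lam - b) ^ k) := by
      have := mul_le_mul r_am r_ak (pow_nonneg (by linarith) k)
        (mul_nonneg hE1pos.le (pow_nonneg hb0.le _))
      nlinarith [this]
    calc P a ≤ C * (a ^ (n₁ + n₂) * (lam - a) ^ k) := (hPb a haIcc).2
      _ ≤ C * ((E1 * E2) * (b ^ (n₁ + n₂) * (lam - b) ^ k)) :=
          mul_le_mul_of_nonneg_left hprod hC0'.le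
      _ ≤ C * ((E1 * E2) * (C * P b)) :=
          mul_le_mul_of_nonneg_left (mul_le_mul_of_nonneg_left hbP hDpos.le) hC0'.le
      _ = C ^ 2 * (E1 * E2) * P b := by ring
  -- equations at x
  have hAx : deriv (deriv u) x * P a = Real.exp (-(t * u x + (1 - t) * uref x)) * J x := hequ x hx
  have hBx : deriv (deriv u₀) x * P b = Real.exp (-(uref x)) * J x := hequ₀ x hx
  have hJx : 0 < J x := hJpos x hx
  have hB0 : 0 < deriv (deriv u₀) x := by
    have hpos : 0 < deriv (deriv u₀) x * P b := by
      rw [hBx]; positivity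
    rcases mul_pos_iff.mp hpos with ⟨h1, _⟩ | ⟨_, h2⟩
    · exact h1
    · exact absurd hPbx (not_lt.mpr h2.le)
  -- ratio bounds via core'
  have hupper : deriv (deriv u) x ≤ (C ^ 3 * (E1 * E2)) * deriv (deriv u₀) x :=
    core' hPa hPbx hJx hC0' hDpos hAx hBx (Real.exp_nonneg _) (hee1 x) hPab
  have hlower : deriv (deriv u₀) x ≤ (C ^ 3 * (E1 * E2)) * deriv (deriv u) x :=
    core' hPbx hPa hJx hC0' hDpos hBx hAx (Real.exp_nonneg _) (hee2 x) hPba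
  -- identify C^N with C^3 * E1 * E2
  have hCN : C ^ (3 + 3 * ((n₁ : ℝ) + n₂) / ((n₁ : ℝ) + n₂ + 1) + 3 * (k : ℝ) / ((k : ℝ) + 1))
      = C ^ 3 * (E1 * E2) := by
    rw [Real.rpow_add hC0', Real.rpow_add hC0']
    have h3 : C ^ (3:ℝ) = C ^ (3:ℕ) := by
      rw [show (3:ℝ) = ((3:ℕ):ℝ) by norm_num, Real.rpow_natCast]
    have hE1 : C ^ (3 * ((n₁ : ℝ) + n₂) / ((n₁ : ℝ) + n₂ + 1)) = E1 := by
      rw [hE1def, ← Real.rpow_natCast C 3, ← Real.rpow_mul hC0'.le]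
      congr 1
      push_cast
      ring
    have hE2 : C ^ (3 * (k : ℝ) / ((k : ℝ) + 1)) = E2 := by
      rw [hE2def, ← Real.rpow_natCast C 3, ← Real.rpow_mul hC0'.le]
      congr 1
      push_cast
      ring
    rw [h3, hE1, hE2]
    ring
  have hKpos : 0 < C ^ 3 * (E1 * E2) := mul_pos (pow_pos hC0' 3) hDpos
  constructor
  · rw [Real.rpow_neg hC0'.le, hCN, le_div_iff₀ hB0, inv_mul_le_iff₀ hKpos]
    exact hlower
  · rw [hCN, div_le_iff₀ hB0]
    exact hupper
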